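/- Let v ≥ 2 be an integer and let γ be a real number with γ > v/(2(v−1)). Then the function f : ℝ^v → ℝ defined by f(α) = F₁(α) + γ·F₂(α) is not convex. -/

import Mathlib

/-!
The objective depends on `α` only through `|α|`, so for `x = (ε, 1, …, 1)` and
`y = (-ε, 1, …, 1)` convexity at `t = 1/2` would give `f(0, 1, …, 1) ≤ f(x)`. Along
`a ↦ (a, 1, …, 1)`, however, `f(a) - f(0) = |a| (γ(v-1)|a| - (2γ(v-1) - v)) / v²`, which is
negative for small `a ≠ 0` exactly when `γ > v / (2(v-1))`.
-/

/-- Mean absolute value `F₁(α) = (1/v)·Σ |α_i|`. -/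
noncomputable def F1 (v : ℕ) (α : EuclideanSpace ℝ (Fin v)) : ℝ := (∑ i, |α i|) / v

/-- Variance of absolute values `F₂(α) = (1/v)·Σ (|α_i| − F₁(α))²`. -/
noncomputable def F2 (v : ℕ) (α : EuclideanSpace ℝ (Fin v)) : ℝ :=
  (∑ i, (|α i| - F1 v α) ^ 2) / v

open Finset Function

theorem F2_eq_sub_sq {v : ℕ} (hv : v ≠ 0) (α : EuclideanSpace ℝ (Fin v)) :
    F2 v α = (∑ i, α i ^ 2) / v - F1 v α ^ 2 := by
  have hv' : (v : ℝ) ≠ 0 := Nat.cast_ne_zero.mpr hv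
  simp only [F2, F1, sub_sq, sum_add_distrib, sum_sub_distrib, sq_abs, ← sum_mul, ← mul_sum,
    sum_const, card_univ, Fintype.card_fin, nsmul_eq_mul]
  field_simp
  ring

theorem sum_comp_update_const {ι α : Type*} [Fintype ι] [DecidableEq ι] (φ : α → ℝ) (c : α)
    (i : ι) (a : α) :
    ∑ j, φ (update (fun _ => c) i a j) = φ a + (Fintype.card ι - 1) * φ c := by
  rw [Fintype.sum_eq_add_sum_compl i, update_self,
    sum_congr rfl fun j hj => by rw [update_of_ne (by simpa using hj)], sum_const,
    card_compl, card_singleton, nsmul_eq_mul, Nat.cast_pred (Fintype.card_pos_iff.mpr ⟨i⟩)]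

noncomputable def updateOnes {v : ℕ} (i : Fin v) (a : ℝ) : EuclideanSpace ℝ (Fin v) :=
  WithLp.toLp 2 (update (fun _ => 1) i a)

section updateOnes

variable {v : ℕ} (i : Fin v)

theorem smul_add_smul_updateOnes (a b t : ℝ) :
    t • updateOnes i a + (1 - t) • updateOnes i b = updateOnes i (t * a + (1 - t) * b) := by
  ext j
  rcases eq_or_ne j i with rfl | hj
  · simp [updateOnes]
  · simp [updateOnes, hj]

theorem F1_updateOnes (a : ℝ) : F1 v (updateOnes i a) = (|a| + (v - 1)) / v := by
  simp only [F1, updateOnes, PiLp.toLp_apply]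
  rw [sum_comp_update_const, Fintype.card_fin, abs_one, mul_one]

theorem F2_updateOnes (a : ℝ) :
    F2 v (updateOnes i a) = (a ^ 2 + (v - 1)) / v - ((|a| + (v - 1)) / v) ^ 2 := by
  rw [F2_eq_sub_sq (Fin.pos i).ne', F1_updateOnes]
  simp only [updateOnes, PiLp.toLp_apply]
  rw [sum_comp_update_const (· ^ 2), Fintype.card_fin, one_pow, mul_one]

theorem objective_updateOnes (γ a : ℝ) :
    F1 v (updateOnes i a) + γ * F2 v (updateOnes i a) =
      F1 v (updateOnes i 0) + γ * F2 v (updateOnes i 0) +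
        |a| * (γ * (v - 1) * |a| - (2 * γ * (v - 1) - v)) / v ^ 2 := by
  have hv : (v : ℝ) ≠ 0 := by exact_mod_cast (Fin.pos i).ne'
  simp only [F1_updateOnes, F2_updateOnes, abs_zero, ← sq_abs a]
  field_simp
  ring

end updateOnes

/-- For `v ≥ 2` and `γ > v/(2(v−1))`, the objective `α ↦ F₁(α) + γ·F₂(α)` is not convex. -/
theorem objective_not_convex (v : ℕ) (hv : 2 ≤ v) (γ : ℝ)
    (hγ : (v : ℝ) / (2 * (v - 1)) < γ) :
    ¬ (∀ (x y : EuclideanSpace ℝ (Fin v)) (t : ℝ), 0 ≤ t → t ≤ 1 →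
        F1 v (t • x + (1 - t) • y) + γ * F2 v (t • x + (1 - t) • y)
          ≤ t * (F1 v x + γ * F2 v x) + (1 - t) * (F1 v y + γ * F2 v y)) := by
  intro hconv
  have hv1 : (1 : ℝ) < v := by exact_mod_cast hv
  have hc : 0 < 2 * γ * (v - 1) - v := by
    rw [div_lt_iff₀ (by linarith)] at hγ
    linarith
  have hγ0 : 0 < γ * (v - 1) := by linarith
  set ε := (2 * γ * (v - 1) - v) / (2 * (γ * (v - 1))) with hε_def
  have hε : 0 < ε := by positivity
  have hγε : γ * (v - 1) * ε = (2 * γ * (v - 1) - v) / 2 := by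
    rw [hε_def]; field_simp; exact mul_div_cancel_left₀ _ hγ0.ne'
  have key := hconv (updateOnes ⟨0, by omega⟩ ε) (updateOnes ⟨0, by omega⟩ (-ε)) (1 / 2)
    (by norm_num) (by norm_num)
  rw [smul_add_smul_updateOnes, show 1 / 2 * ε + (1 - 1 / 2) * -ε = 0 by ring,
    objective_updateOnes _ γ ε, objective_updateOnes _ γ (-ε), abs_neg, abs_of_pos hε] at key
  have hdrop : ε * (γ * (v - 1) * ε - (2 * γ * (v - 1) - v)) / (v : ℝ) ^ 2 < 0 := by
    apply div_neg_of_neg_of_pos _ (by positivity)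
    apply mul_neg_of_pos_of_neg hε
    linarith
  linarith
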